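/- Every maximal subgroup H of the semigroup M_n(ℝ) of n × n real matrices under tropical (max-plus) multiplication is isomorphic as a group to a direct product ℝ × Σ for some subgroup Σ of the symmetric group S_n. -/
import Mathlib


open Finset Matrix

/-- Tropical (max-plus) matrix multiplication on n × n real matrices. -/
noncomputable def tmul {n : ℕ} [NeZero n] (A B : Matrix (Fin n) (Fin n) ℝ) :
    Matrix (Fin n) (Fin n) ℝ :=
  fun i j => univ.sup' univ_nonempty (fun k => A i k + B k j)

/-- A subset of M_n(ℝ) which is a subgroup of the tropical matrix semigroup:
nonempty, closed under ⊗, with a (local) identity and inverses. -/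
def IsSubgroupOfTrop {n : ℕ} [NeZero n] (H : Set (Matrix (Fin n) (Fin n) ℝ)) : Prop :=
  H.Nonempty ∧ (∀ a ∈ H, ∀ b ∈ H, tmul a b ∈ H) ∧
  ∃ e ∈ H, (∀ a ∈ H, tmul e a = a ∧ tmul a e = a) ∧
    (∀ a ∈ H, ∃ b ∈ H, tmul a b = e ∧ tmul b a = e)

/-- A maximal subgroup: a subgroup not properly contained in any subgroup. -/
def IsMaximalSubgroupOfTrop {n : ℕ} [NeZero n]
    (H : Set (Matrix (Fin n) (Fin n) ℝ)) : Prop :=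
  IsSubgroupOfTrop H ∧ ∀ H', IsSubgroupOfTrop H' → H ⊆ H' → H = H'

namespace TropAux

set_option linter.unusedSectionVars false

variable {n : ℕ} [NeZero n]

abbrev MM (n : ℕ) := Matrix (Fin n) (Fin n) ℝ

/-- add a scalar to every entry -/
noncomputable def sc (c : ℝ) (A : MM n) : MM n := fun i j => c + A i j

lemma sc_apply (c : ℝ) (A : MM n) (i j : Fin n) : sc c A i j = c + A i j := rfl

lemma sc_zero (A : MM n) : sc 0 A = A := by funext i j; simp [sc]

lemma sc_sc (c d : ℝ) (A : MM n) : sc c (sc d A) = sc (c + d) A := by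
  funext i j; simp [sc]; ring

lemma le_tmul {A B : MM n} {i j : Fin n} (k : Fin n) : A i k + B k j ≤ tmul A B i j := by
  show _ ≤ univ.sup' univ_nonempty (fun k => A i k + B k j)
  exact Finset.le_sup' (fun k => A i k + B k j) (mem_univ k)

lemma tmul_exists (A B : MM n) (i j : Fin n) : ∃ k, tmul A B i j = A i k + B k j := by
  obtain ⟨k, -, hk⟩ := Finset.exists_mem_eq_sup' univ_nonempty (fun k => A i k + B k j)
  exact ⟨k, hk⟩

lemma tmul_le_iff {A B : MM n} {i j : Fin n} {c : ℝ} :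
    tmul A B i j ≤ c ↔ ∀ k, A i k + B k j ≤ c := by
  unfold tmul; simp [Finset.sup'_le_iff]

lemma sc_tmul (c : ℝ) (A B : MM n) : tmul (sc c A) B = sc c (tmul A B) := by
  funext i j
  show (univ.sup' univ_nonempty fun k => sc c A i k + B k j) = c + _
  rw [show (fun k => sc c A i k + B k j) = fun k => c + (A i k + B k j) from by
    funext k; simp [sc]; ring]
  exact (comp_sup'_eq_sup'_comp univ_nonempty (fun x => c + x) (fun x y => add_sup x y c)).symm

lemma tmul_sc (c : ℝ) (A B : MM n) : tmul A (sc c B) = sc c (tmul A B) := by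
  funext i j
  show (univ.sup' univ_nonempty fun k => A i k + sc c B k j) = c + _
  rw [show (fun k => A i k + sc c B k j) = fun k => c + (A i k + B k j) from by
    funext k; simp [sc]; ring]
  exact (comp_sup'_eq_sup'_comp univ_nonempty (fun x => c + x) (fun x y => add_sup x y c)).symm

lemma tmul_assoc (A B C : MM n) : tmul (tmul A B) C = tmul A (tmul B C) := by
  funext i j
  apply le_antisymm
  · rw [tmul_le_iff]
    intro k
    obtain ⟨l, hl⟩ := tmul_exists A B i k
    rw [hl]
    calc A i l + B l k + C k j = A i l + (B l k + C k j) := by ring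
    _ ≤ A i l + tmul B C l j := by gcongr; exact le_tmul k
    _ ≤ _ := le_tmul l
  · rw [tmul_le_iff]
    intro k
    obtain ⟨l, hl⟩ := tmul_exists B C k j
    rw [hl]
    calc A i k + (B k l + C l j) = (A i k + B k l) + C l j := by ring
    _ ≤ tmul A B i l + C l j := by gcongr; exact le_tmul k
    _ ≤ _ := le_tmul l

section Idem
variable {E : MM n} (hE : tmul E E = E)

include hE

lemma diag_nonpos (i : Fin n) : E i i ≤ 0 := by
  have := le_tmul (A := E) (B := E) (i := i) (j := i) i
  rw [hE] at this; linarith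

lemma triangle (i k j : Fin n) : E i k + E k j ≤ E i j := by
  have := le_tmul (A := E) (B := E) (i := i) (j := j) k
  rwa [hE] at this

lemma factor (i j : Fin n) : ∃ v, E v v = 0 ∧ E i j = E i v + E v j := by
  classical
  -- step function: from a, pick k with E a j = E a k + E k j
  have hstep : ∀ a : Fin n, ∃ k, E a j = E a k + E k j := by
    intro a
    obtain ⟨k, hk⟩ := tmul_exists E E a j
    rw [hE] at hk
    exact ⟨k, hk⟩
  choose g hg using hstep
  set v : ℕ → Fin n := fun t => g^[t] i with hv
  have hvsucc : ∀ t, v (t + 1) = g (v t) := by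
    intro t; simp [hv, Function.iterate_succ_apply']
  -- invariant
  have hinv : ∀ t, E i j = (∑ s ∈ range t, E (v s) (v (s + 1))) + E (v t) j := by
    intro t
    induction t with
    | zero => simp [hv]
    | succ t ih =>
      rw [Finset.sum_range_succ, ih, hvsucc t]
      have := hg (v t)
      linarith
  -- chain bound
  have hchain : ∀ t t' : ℕ, t < t' →
      (∑ s ∈ Ico t t', E (v s) (v (s + 1))) ≤ E (v t) (v t') := by
    intro t t' h
    induction t' with
    | zero => omega
    | succ t' ih =>
      rcases Nat.lt_or_ge t t' with h' | h'
      · rw [Finset.sum_Ico_succ_top (by omega)]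
        calc (∑ s ∈ Ico t t', E (v s) (v (s+1))) + E (v t') (v (t'+1))
            ≤ E (v t) (v t') + E (v t') (v (t'+1)) := by
              have := ih h'; linarith
          _ ≤ _ := triangle hE _ _ _
      · have : t = t' := by omega
        subst this
        rw [Nat.Ico_succ_singleton]
        simp
  -- pigeonhole
  obtain ⟨a, b, hab, heq⟩ := Fintype.exists_ne_map_eq_of_card_lt
    (fun a : Fin (n + 1) => v a) (by simp)
  -- wlog a < b
  obtain ⟨t, t', htt, hvv⟩ : ∃ t t' : ℕ, t < t' ∧ v t = v t' := by
    rcases lt_or_gt_of_ne hab with h | h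
    · exact ⟨a, b, h, heq⟩
    · exact ⟨b, a, h, heq.symm⟩
  set vv := v t with hvvdef
  -- middle sum is zero
  have hmid : (∑ s ∈ Ico t t', E (v s) (v (s + 1))) = 0 := by
    have h1 := hinv t
    have h2 := hinv t'
    rw [← hvv] at h2
    have h3 : (∑ s ∈ range t, E (v s) (v (s+1))) + (∑ s ∈ Ico t t', E (v s) (v (s+1)))
        = ∑ s ∈ range t', E (v s) (v (s+1)) := Finset.sum_range_add_sum_Ico _ (le_of_lt htt)
    linarith
  have hdiag : E vv vv = 0 := by
    have h1 := hchain t t' htt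
    rw [hmid, ← hvv] at h1
    exact le_antisymm (diag_nonpos hE vv) h1
  refine ⟨vv, hdiag, le_antisymm ?_ (triangle hE i vv j)⟩
  rcases Nat.eq_zero_or_pos t with ht0 | ht0
  · have : vv = i := by rw [hvvdef, ht0]; simp [hv]
    rw [this] at hdiag ⊢
    rw [hdiag]; linarith
  · have h1 := hinv t
    have h2 : (∑ s ∈ range t, E (v s) (v (s+1))) ≤ E i vv := by
      have := hchain 0 t ht0
      rw [show Ico 0 t = range t from by ext a; simp] at this
      simpa [hv] using this
    linarith

end Idem

/-- the equivalence class of `i` among zero-diagonal indices -/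
noncomputable def cls (E : MM n) (i : Fin n) : Finset (Fin n) := by
  classical exact
  univ.filter (fun j => E j j = 0 ∧ E i j + E j i = 0)

/-- canonical representative -/
noncomputable def rho (E : MM n) (i : Fin n) : Fin n :=
  if h : i ∈ cls E i then (cls E i).min' ⟨i, h⟩ else i

lemma mem_cls {E : MM n} {i j : Fin n} :
    j ∈ cls E i ↔ E j j = 0 ∧ E i j + E j i = 0 := by simp [cls]

lemma self_mem_cls {E : MM n} {i : Fin n} (hi : E i i = 0) : i ∈ cls E i := by
  rw [mem_cls]; exact ⟨hi, by linarith⟩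

section Idem
variable {E : MM n} (hE : tmul E E = E)
include hE

lemma cls_trans {i j k : Fin n} (hi : E i i = 0) (hj : j ∈ cls E i) (hk : k ∈ cls E j) :
    k ∈ cls E i := by
  rw [mem_cls] at hj hk ⊢
  obtain ⟨hjj, hij⟩ := hj
  obtain ⟨hkk, hjk⟩ := hk
  refine ⟨hkk, le_antisymm (by have := triangle hE i k i; linarith) ?_⟩
  have h1 : E i j + E j k ≤ E i k := triangle hE i j k
  have h2 : E k j + E j i ≤ E k i := triangle hE k j i
  linarith

lemma cls_symm {i j : Fin n} (hi : E i i = 0) (hj : j ∈ cls E i) : i ∈ cls E j := by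
  rw [mem_cls] at hj ⊢
  exact ⟨hi, by linarith [hj.2]⟩

lemma cls_eq {i j : Fin n} (hi : E i i = 0) (hj : j ∈ cls E i) : cls E i = cls E j := by
  have hjj : E j j = 0 := (mem_cls.1 hj).1
  ext k
  constructor
  · intro hk
    exact cls_trans hE hjj (cls_symm hE hi hj) hk
  · intro hk
    exact cls_trans hE hi hj hk

lemma rho_mem {i : Fin n} (hi : E i i = 0) : rho E i ∈ cls E i := by
  rw [rho, dif_pos (self_mem_cls hi)]
  exact Finset.min'_mem _ _

lemma rho_eq_of_mem {i j : Fin n} (hi : E i i = 0) (hj : j ∈ cls E i) :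
    rho E j = rho E i := by
  have hjj : E j j = 0 := (mem_cls.1 hj).1
  rw [rho, dif_pos (self_mem_cls hjj), rho, dif_pos (self_mem_cls hi)]
  congr 1
  exact (cls_eq hE hi hj).symm

lemma rho_diag {i : Fin n} (hi : E i i = 0) : E (rho E i) (rho E i) = 0 :=
  (mem_cls.1 (rho_mem hE hi)).1

lemma rho_fix {i : Fin n} (hi : E i i = 0) : rho E (rho E i) = rho E i :=
  rho_eq_of_mem hE hi (rho_mem hE hi)

end Idem

/-- representatives of all classes -/
noncomputable def RR (E : MM n) : Finset (Fin n) := by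
  classical exact univ.filter (fun i => E i i = 0 ∧ rho E i = i)

lemma mem_RR {E : MM n} {i : Fin n} : i ∈ RR E ↔ E i i = 0 ∧ rho E i = i := by
  rw [RR]; simp

lemma RR_nonempty {E : MM n} (hE : tmul E E = E) : (RR E).Nonempty := by
  obtain ⟨v, hv, -⟩ := factor hE ⟨0, Nat.pos_of_ne_zero (NeZero.ne n)⟩
    ⟨0, Nat.pos_of_ne_zero (NeZero.ne n)⟩
  exact ⟨rho E v, mem_RR.2 ⟨rho_diag hE hv, rho_fix hE hv⟩⟩

/-- the permutation-like map induced by a group element `A` with inverse `B` -/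
noncomputable def fmap (E A B : MM n) (i : Fin n) : Fin n :=
  if h : (E i i = 0 ∧ rho E i = i) ∧ ∃ k, E k k = 0 ∧ A i k + B k i = 0
  then rho E h.2.choose else i

section Wit

variable {E A B : MM n} (hEE : tmul E E = E)
include hEE

/-- any witness has zero diagonal -/
lemma wit_diag (hBA : tmul B A = E) {i k : Fin n} (hi : E i i = 0)
    (hk : A i k + B k i = 0) : E k k = 0 := by
  have h1 : B k i + A i k ≤ tmul B A k k := le_tmul i
  rw [hBA] at h1
  have h2 := diag_nonpos hEE k
  linarith

omit hEE in
lemma wit_le (hAB : tmul A B = E) {i : Fin n} (hi : E i i = 0) (k : Fin n) :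
    A i k + B k i ≤ 0 := by
  have h1 : A i k + B k i ≤ tmul A B i i := le_tmul k
  rwa [hAB, hi] at h1

lemma wit_total (hAB : tmul A B = E) (hBA : tmul B A = E) {i : Fin n} (hi : E i i = 0) :
    ∃ k, E k k = 0 ∧ A i k + B k i = 0 := by
  obtain ⟨k, hk⟩ := tmul_exists A B i i
  rw [hAB, hi] at hk
  exact ⟨k, wit_diag hEE hBA hi hk.symm, hk.symm⟩

lemma wit_class (hAB : tmul A B = E) (hAE : tmul A E = A) (hEB : tmul E B = B)
    {i k k' : Fin n} (hi : E i i = 0) (hk : A i k + B k i = 0) (hk' : k' ∈ cls E k) :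
    A i k' + B k' i = 0 := by
  rw [mem_cls] at hk'
  have h1 : A i k + E k k' ≤ A i k' := by
    have := le_tmul (A := A) (B := E) (i := i) (j := k') k
    rwa [hAE] at this
  have h2 : E k' k + B k i ≤ B k' i := by
    have := le_tmul (A := E) (B := B) (i := k') (j := i) k
    rwa [hEB] at this
  have h3 := wit_le hAB hi k'
  linarith [hk'.2]

lemma wit_unique (hBA : tmul B A = E) {i k k' : Fin n} (hi : E i i = 0)
    (hk : A i k + B k i = 0) (hk' : A i k' + B k' i = 0) : k' ∈ cls E k := by
  have h1 : B k i + A i k' ≤ E k k' := by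
    have := le_tmul (A := B) (B := A) (i := k) (j := k') i
    rwa [hBA] at this
  have h2 : B k' i + A i k ≤ E k' k := by
    have := le_tmul (A := B) (B := A) (i := k') (j := k) i
    rwa [hBA] at this
  have hkd := wit_diag hEE hBA hi hk
  have hk'd := wit_diag hEE hBA hi hk'
  have h3 := triangle hEE k k' k
  rw [hkd] at h3
  exact mem_cls.2 ⟨hk'd, by linarith⟩

lemma wit_base (hAB : tmul A B = E) (hEA : tmul E A = A) (hBE : tmul B E = B)
    {i i' k : Fin n} (hi : E i i = 0) (hi' : i' ∈ cls E i)
    (hk : A i k + B k i = 0) : A i' k + B k i' = 0 := by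
  rw [mem_cls] at hi'
  have h1 : E i' i + A i k ≤ A i' k := by
    have := le_tmul (A := E) (B := A) (i := i') (j := k) i
    rwa [hEA] at this
  have h2 : B k i + E i i' ≤ B k i' := by
    have := le_tmul (A := B) (B := E) (i := k) (j := i') i
    rwa [hBE] at this
  have h3 := wit_le hAB hi'.1 k
  linarith [hi'.2]

lemma fmap_eq (hAB : tmul A B = E) (hBA : tmul B A = E) {i k : Fin n}
    (hiR : i ∈ RR E) (hk : A i k + B k i = 0) : fmap E A B i = rho E k := by
  rw [mem_RR] at hiR
  have hkd := wit_diag hEE hBA hiR.1 hk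
  have hpos : (E i i = 0 ∧ rho E i = i) ∧ ∃ k, E k k = 0 ∧ A i k + B k i = 0 :=
    ⟨hiR, k, hkd, hk⟩
  rw [fmap, dif_pos hpos]
  have hch := hpos.2.choose_spec
  have := wit_unique hEE hBA hiR.1 hch.2 hk
  exact (rho_eq_of_mem hEE hch.1 this).symm

omit hEE in
lemma fmap_not {i : Fin n} (hiR : i ∉ RR E) : fmap E A B i = i := by
  rw [mem_RR] at hiR
  rw [fmap, dif_neg]
  tauto

lemma fmap_mem_RR (hAB : tmul A B = E) (hBA : tmul B A = E) {i : Fin n}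
    (hiR : i ∈ RR E) : fmap E A B i ∈ RR E := by
  obtain ⟨k, hkd, hk⟩ := wit_total hEE hAB hBA (mem_RR.1 hiR).1
  rw [fmap_eq hEE hAB hBA hiR hk]
  exact mem_RR.2 ⟨rho_diag hEE hkd, rho_fix hEE hkd⟩

lemma fmap_invol (hAB : tmul A B = E) (hBA : tmul B A = E)
    (hAE : tmul A E = A) (hEA : tmul E A = A) (hBE : tmul B E = B) (hEB : tmul E B = B)
    (i : Fin n) : fmap E B A (fmap E A B i) = i := by
  by_cases hiR : i ∈ RR E
  · have hi := (mem_RR.1 hiR).1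
    obtain ⟨k, hkd, hk⟩ := wit_total hEE hAB hBA hi
    rw [fmap_eq hEE hAB hBA hiR hk]
    -- i is a witness for B at k, transfer to rho E k
    have hwB : B k i + A i k = 0 := by linarith
    have hwB' : B (rho E k) i + A i (rho E k) = 0 :=
      wit_base hEE hBA hEB hAE hkd (rho_mem hEE hkd) hwB
    have hrR : rho E k ∈ RR E := mem_RR.2 ⟨rho_diag hEE hkd, rho_fix hEE hkd⟩
    rw [fmap_eq hEE hBA hAB hrR hwB']
    exact (mem_RR.1 hiR).2
  · rw [fmap_not hiR, fmap_not hiR]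

end Wit

section Comp
variable {E A B A' B' : MM n} (hEE : tmul E E = E)
  (hAB : tmul A B = E) (hBA : tmul B A = E)
  (hAE : tmul A E = A) (hEA : tmul E A = A) (hBE : tmul B E = B) (hEB : tmul E B = B)
  (hA'B' : tmul A' B' = E) (hB'A' : tmul B' A' = E)
  (hA'E : tmul A' E = A') (hEA' : tmul E A' = A') (hB'E : tmul B' E = B')
  (hEB' : tmul E B' = B')
include hEE hAB hBA hAE hEA hBE hEB hA'B' hB'A' hA'E hEA' hB'E hEB'

lemma hPQ : tmul (tmul A A') (tmul B' B) = E := by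
  rw [tmul_assoc, ← tmul_assoc A' B' B, hA'B', hEB, hAB]

lemma hQP : tmul (tmul B' B) (tmul A A') = E := by
  rw [tmul_assoc, ← tmul_assoc B A A', hBA, hEA', hB'A']

lemma prod_wit_entry {i : Fin n} (hiR : i ∈ RR E) :
    fmap E (tmul A A') (tmul B' B) i = fmap E A' B' (fmap E A B i) ∧
    (tmul A A') i (fmap E (tmul A A') (tmul B' B) i)
      = A i (fmap E A B i) + A' (fmap E A B i) (fmap E A' B' (fmap E A B i)) := by
  have hi := (mem_RR.1 hiR).1
  obtain ⟨k, hkd, hk⟩ := wit_total hEE hAB hBA hi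
  have hfa : fmap E A B i = rho E k := fmap_eq hEE hAB hBA hiR hk
  set k₀ := rho E k with hk₀
  have hk₀d : E k₀ k₀ = 0 := rho_diag hEE hkd
  have hk₀R : k₀ ∈ RR E := mem_RR.2 ⟨hk₀d, rho_fix hEE hkd⟩
  have hk₀wit : A i k₀ + B k₀ i = 0 :=
    wit_class hEE hAB hAE hEB hi hk (rho_mem hEE hkd)
  obtain ⟨l, hld, hl⟩ := wit_total hEE hA'B' hB'A' hk₀d
  have hfa' : fmap E A' B' k₀ = rho E l := fmap_eq hEE hA'B' hB'A' hk₀R hl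
  set l₀ := rho E l with hl₀
  have hl₀wit : A' k₀ l₀ + B' l₀ k₀ = 0 :=
    wit_class hEE hA'B' hA'E hEB' hk₀d hl (rho_mem hEE hld)
  have hwit : (tmul A A') i l₀ + (tmul B' B) l₀ i = 0 := by
    have h1 : A i k₀ + A' k₀ l₀ ≤ (tmul A A') i l₀ := le_tmul k₀
    have h2 : B' l₀ k₀ + B k₀ i ≤ (tmul B' B) l₀ i := le_tmul k₀
    have h3 := wit_le (hPQ hEE hAB hBA hAE hEA hBE hEB hA'B' hB'A' hA'E hEA' hB'E hEB')
      hi l₀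
    linarith
  have hfp : fmap E (tmul A A') (tmul B' B) i = rho E l₀ :=
    fmap_eq hEE (hPQ hEE hAB hBA hAE hEA hBE hEB hA'B' hB'A' hA'E hEA' hB'E hEB')
      (hQP hEE hAB hBA hAE hEA hBE hEB hA'B' hB'A' hA'E hEA' hB'E hEB') hiR hwit
  have hl₀fix : rho E l₀ = l₀ := rho_fix hEE hld
  constructor
  · rw [hfp, hl₀fix, hfa, hfa']
  · rw [hfp, hl₀fix, hfa, hfa']
    have h1 : A i k₀ + A' k₀ l₀ ≤ (tmul A A') i l₀ := le_tmul k₀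
    have h2 : B' l₀ k₀ + B k₀ i ≤ (tmul B' B) l₀ i := le_tmul k₀
    have h3 := wit_le (hPQ hEE hAB hBA hAE hEA hBE hEB hA'B' hB'A' hA'E hEA' hB'E hEB')
      hi l₀
    linarith

lemma fmap_comp :
    fmap E (tmul A A') (tmul B' B) = fun i => fmap E A' B' (fmap E A B i) := by
  funext i
  by_cases hiR : i ∈ RR E
  · exact (prod_wit_entry hEE hAB hBA hAE hEA hBE hEB hA'B' hB'A' hA'E hEA' hB'E hEB'
      hiR).1
  · rw [fmap_not hiR, fmap_not hiR, fmap_not hiR]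

end Comp

/-- total weight of a group element -/
noncomputable def w (E A B : MM n) : ℝ := ∑ i ∈ RR E, A i (fmap E A B i)

section Wt
variable {E A B A' B' : MM n} (hEE : tmul E E = E)
  (hAB : tmul A B = E) (hBA : tmul B A = E)
  (hAE : tmul A E = A) (hEA : tmul E A = A) (hBE : tmul B E = B) (hEB : tmul E B = B)
include hEE hAB hBA hAE hEA hBE hEB

lemma w_mul (hA'B' : tmul A' B' = E) (hB'A' : tmul B' A' = E)
    (hA'E : tmul A' E = A') (hEA' : tmul E A' = A') (hB'E : tmul B' E = B')
    (hEB' : tmul E B' = B') :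
    w E (tmul A A') (tmul B' B) = w E A B + w E A' B' := by
  unfold w
  rw [show (∑ i ∈ RR E, (tmul A A') i (fmap E (tmul A A') (tmul B' B) i))
      = ∑ i ∈ RR E, (A i (fmap E A B i)
          + A' (fmap E A B i) (fmap E A' B' (fmap E A B i))) from
    Finset.sum_congr rfl fun i hi =>
      (prod_wit_entry hEE hAB hBA hAE hEA hBE hEB hA'B' hB'A' hA'E hEA' hB'E hEB' hi).2]
  rw [Finset.sum_add_distrib]
  congr 1
  exact Finset.sum_nbij' (fun i => fmap E A B i) (fun i => fmap E B A i)
    (fun a ha => fmap_mem_RR hEE hAB hBA ha)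
    (fun a ha => fmap_mem_RR hEE hBA hAB ha)
    (fun a _ => fmap_invol hEE hAB hBA hAE hEA hBE hEB a)
    (fun a _ => fmap_invol hEE hBA hAB hBE hEB hAE hEA a)
    (fun a _ => rfl)

lemma eq_sc_of_fix (hfix : ∀ i, fmap E A B i = i) : ∃ c, A = sc c E := by
  have hdw : ∀ i, E i i = 0 → A i i + B i i = 0 := by
    intro i hi
    obtain ⟨k, hkd, hk⟩ := wit_total hEE hAB hBA (rho_diag hEE hi)
    have hrR : rho E i ∈ RR E := mem_RR.2 ⟨rho_diag hEE hi, rho_fix hEE hi⟩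
    have h1 : fmap E A B (rho E i) = rho E k := fmap_eq hEE hAB hBA hrR hk
    have h2 : rho E k = rho E i := by rw [← h1, hfix]
    have hik : i ∈ cls E k := by
      rw [cls_eq hEE hkd (rho_mem hEE hkd), h2]
      exact cls_symm hEE hi (rho_mem hEE hi)
    have h3 : A (rho E i) i + B i (rho E i) = 0 :=
      wit_class hEE hAB hAE hEB (rho_diag hEE hi) hk hik
    exact wit_base hEE hAB hEA hBE (rho_diag hEE hi)
      (cls_symm hEE hi (rho_mem hEE hi)) h3
  have hconst : ∀ i j, E i i = 0 → E j j = 0 → A i i ≤ A j j := by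
    intro i j hi hj
    have h1 : A i i + B i j ≤ E i j := by
      have := le_tmul (A := A) (B := B) (i := i) (j := j) i
      rwa [hAB] at this
    have h2 : E i j + B j j ≤ B i j := by
      have := le_tmul (A := E) (B := B) (i := i) (j := j) j
      rwa [hEB] at this
    have h3 := hdw j hj
    linarith
  obtain ⟨i₀, hi₀⟩ := RR_nonempty hEE
  have hi₀d : E i₀ i₀ = 0 := (mem_RR.1 hi₀).1
  refine ⟨A i₀ i₀, ?_⟩
  set c := A i₀ i₀ with hc
  have hPc : ∀ p, E p p = 0 → A p p = c := fun p hp =>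
    le_antisymm (hconst p i₀ hp hi₀d) (hconst i₀ p hi₀d hp)
  have hpq : ∀ p q, E p p = 0 → E q q = 0 → A p q = c + E p q := by
    intro p q hp hq
    have hge : A p p + E p q ≤ A p q := by
      have := le_tmul (A := A) (B := E) (i := p) (j := q) p
      rwa [hAE] at this
    have hle : A p q + B q q ≤ E p q := by
      have := le_tmul (A := A) (B := B) (i := p) (j := q) q
      rwa [hAB] at this
    have h4 := hdw q hq
    have h5 := hPc p hp
    have h6 := hPc q hq
    linarith
  funext i j
  show A i j = c + E i j
  apply le_antisymm
  · obtain ⟨k, hk⟩ := tmul_exists E A i j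
    rw [hEA] at hk
    obtain ⟨l, hl⟩ := tmul_exists A E k j
    rw [hAE] at hl
    obtain ⟨p1, hp1, hfac1⟩ := factor hEE i k
    obtain ⟨q1, hq1, hfac2⟩ := factor hEE l j
    have hb1 : E p1 k + A k l ≤ A p1 l := by
      have := le_tmul (A := E) (B := A) (i := p1) (j := l) k
      rwa [hEA] at this
    have hb2 : A p1 l + E l q1 ≤ A p1 q1 := by
      have := le_tmul (A := A) (B := E) (i := p1) (j := q1) l
      rwa [hAE] at this
    have hb3 := hpq p1 q1 hp1 hq1
    have ht1 : E i p1 + E p1 q1 ≤ E i q1 := triangle hEE _ _ _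
    have ht2 : E i q1 + E q1 j ≤ E i j := triangle hEE _ _ _
    linarith
  · obtain ⟨p, hp, hpfac⟩ := factor hEE i j
    have h1 : E i p + A p j ≤ A i j := by
      have := le_tmul (A := E) (B := A) (i := i) (j := j) p
      rwa [hEA] at this
    have h2 : A p p + E p j ≤ A p j := by
      have := le_tmul (A := A) (B := E) (i := p) (j := j) p
      rwa [hAE] at this
    have h3 := hPc p hp
    linarith

lemma fmap_sc (d : ℝ) : fmap E (sc d A) (sc (-d) B) = fmap E A B := by
  have hsAB : tmul (sc d A) (sc (-d) B) = E := by
    rw [sc_tmul, tmul_sc, sc_sc]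
    simp [hAB, sc_zero]
  have hsBA : tmul (sc (-d) B) (sc d A) = E := by
    rw [sc_tmul, tmul_sc, sc_sc]
    simp [hBA, sc_zero]
  funext i
  by_cases hiR : i ∈ RR E
  · obtain ⟨k, hkd, hk⟩ := wit_total hEE hAB hBA (mem_RR.1 hiR).1
    have hsk : (sc d A) i k + (sc (-d) B) k i = 0 := by
      simp only [sc_apply]; linarith
    rw [fmap_eq hEE hsAB hsBA hiR hsk, fmap_eq hEE hAB hBA hiR hk]
  · rw [fmap_not hiR, fmap_not hiR]

lemma w_sc (d : ℝ) : w E (sc d A) (sc (-d) B) = (RR E).card * d + w E A B := by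
  unfold w
  rw [fmap_sc hEE hAB hBA hAE hEA hBE hEB d]
  rw [show (∑ i ∈ RR E, sc d A i (fmap E A B i))
      = ∑ i ∈ RR E, (d + A i (fmap E A B i)) from rfl]
  rw [Finset.sum_add_distrib, Finset.sum_const, nsmul_eq_mul]

end Wt

/-- the permutation of class representatives attached to a group element `A`
with inverse `B` -/
noncomputable def pm (E A B : MM n) (hEE : tmul E E = E)
    (hAB : tmul A B = E) (hBA : tmul B A = E)
    (hAE : tmul A E = A) (hEA : tmul E A = A)
    (hBE : tmul B E = B) (hEB : tmul E B = B) : Equiv.Perm (Fin n) where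
  toFun := fmap E B A
  invFun := fmap E A B
  left_inv := fun i => fmap_invol hEE hBA hAB hBE hEB hAE hEA i
  right_inv := fun i => fmap_invol hEE hAB hBA hAE hEA hBE hEB i

set_option maxHeartbeats 2000000 in
theorem main (H : Set (MM n)) (E : MM n)
    (hEH : E ∈ H)
    (hmulH : ∀ a ∈ H, ∀ b ∈ H, tmul a b ∈ H)
    (hid : ∀ a ∈ H, tmul E a = a ∧ tmul a E = a)
    (hinv : ∀ a ∈ H, ∃ b ∈ H, tmul a b = E ∧ tmul b a = E)
    (hscal : ∀ a ∈ H, ∀ c : ℝ, sc c a ∈ H) :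
    ∃ (Sig : Subgroup (Equiv.Perm (Fin n)))
      (e : Multiplicative ℝ × Sig → Matrix (Fin n) (Fin n) ℝ),
      Function.Injective e ∧ Set.range e = H ∧
      ∀ g h, e (g * h) = tmul (e g) (e h) := by
  classical
  have hEE : tmul E E = E := (hid E hEH).1
  choose! inv hinvH hinv1 hinv2 using hinv
  have hscmul : ∀ (X Y : MM n) (c d : ℝ),
      tmul (sc c X) (sc d Y) = sc (c + d) (tmul X Y) := by
    intro X Y c d
    rw [sc_tmul, tmul_sc, sc_sc]
  have huniq : ∀ A ∈ H, ∀ B ∈ H, tmul A B = E → tmul B A = E → B = inv A := by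
    intro A hA B hB h1 h2
    calc B = tmul B E := ((hid B hB).2).symm
    _ = tmul B (tmul A (inv A)) := by rw [hinv1 A hA]
    _ = tmul (tmul B A) (inv A) := (tmul_assoc _ _ _).symm
    _ = tmul E (inv A) := by rw [h2]
    _ = inv A := (hid _ (hinvH A hA)).1
  -- abbreviation for the permutation of A ∈ H
  obtain ⟨P, hP⟩ : ∃ P : ∀ A, A ∈ H → Equiv.Perm (Fin n), ∀ A (hA : A ∈ H),
      P A hA = pm E A (inv A) hEE (hinv1 A hA) (hinv2 A hA)
        ((hid A hA).2) ((hid A hA).1)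
        ((hid _ (hinvH A hA)).2) ((hid _ (hinvH A hA)).1) :=
    ⟨_, fun _ _ => rfl⟩
  have hPapp : ∀ A (hA : A ∈ H) (i : Fin n), P A hA i = fmap E (inv A) A i := by
    intro A hA i; rw [hP]; rfl
  have hPsymm : ∀ A (hA : A ∈ H) (i : Fin n), (P A hA)⁻¹ i = fmap E A (inv A) i := by
    intro A hA i; rw [hP]; rfl
  -- P is multiplicative
  have hPmul : ∀ A (hA : A ∈ H), ∀ A' (hA' : A' ∈ H), ∀ h : tmul A A' ∈ H,
      P (tmul A A') h = P A hA * P A' hA' := by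
    intro A hA A' hA' h
    have hprodinv : inv (tmul A A') = tmul (inv A') (inv A) :=
      (huniq (tmul A A') h (tmul (inv A') (inv A))
        (hmulH _ (hinvH A' hA') _ (hinvH A hA))
        (hPQ hEE (hinv1 A hA) (hinv2 A hA) ((hid A hA).2) ((hid A hA).1)
          ((hid _ (hinvH A hA)).2) ((hid _ (hinvH A hA)).1)
          (hinv1 A' hA') (hinv2 A' hA') ((hid A' hA').2) ((hid A' hA').1)
          ((hid _ (hinvH A' hA')).2) ((hid _ (hinvH A' hA')).1))
        (hQP hEE (hinv1 A hA) (hinv2 A hA) ((hid A hA).2) ((hid A hA).1)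
          ((hid _ (hinvH A hA)).2) ((hid _ (hinvH A hA)).1)
          (hinv1 A' hA') (hinv2 A' hA') ((hid A' hA').2) ((hid A' hA').1)
          ((hid _ (hinvH A' hA')).2) ((hid _ (hinvH A' hA')).1))).symm
    apply Equiv.ext
    intro i
    rw [Equiv.Perm.mul_apply, hPapp, hPapp, hPapp, hprodinv]
    have hcomp := fmap_comp (A := inv A') (B := A') (A' := inv A) (B' := A) hEE
      (hinv2 A' hA') (hinv1 A' hA')
      ((hid _ (hinvH A' hA')).2) ((hid _ (hinvH A' hA')).1)
      ((hid A' hA').2) ((hid A' hA').1)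
      (hinv2 A hA) (hinv1 A hA)
      ((hid _ (hinvH A hA)).2) ((hid _ (hinvH A hA)).1)
      ((hid A hA).2) ((hid A hA).1)
    exact congrFun hcomp i
  -- P of the identity
  have hPE : ∀ h : E ∈ H, P E h = 1 := by
    intro h
    have hEinv : E = inv E := huniq E hEH E hEH hEE hEE
    apply Equiv.ext
    intro i
    rw [hPapp, ← hEinv, Equiv.Perm.one_apply]
    by_cases hiR : i ∈ RR E
    · have hi := (mem_RR.1 hiR).1
      have hwit : E i i + E i i = 0 := by rw [hi]; ring
      rw [fmap_eq hEE hEE hEE hiR hwit]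
      exact (mem_RR.1 hiR).2
    · exact fmap_not hiR
  -- P of the inverse
  have hPinv : ∀ A (hA : A ∈ H), ∀ h : inv A ∈ H, P (inv A) h = (P A hA)⁻¹ := by
    intro A hA h
    have hinvinv : A = inv (inv A) := huniq (inv A) h A hA (hinv2 A hA) (hinv1 A hA)
    apply Equiv.ext
    intro i
    rw [hPapp, ← hinvinv, hPsymm]
  -- P kills scalars
  have hPsc : ∀ A (hA : A ∈ H) (c : ℝ), ∀ h : sc c A ∈ H, P (sc c A) h = P A hA := by
    intro A hA c h
    have h1 : tmul (sc c A) (sc (-c) (inv A)) = E := by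
      rw [hscmul, hinv1 A hA]
      norm_num [sc_zero]
    have h2 : tmul (sc (-c) (inv A)) (sc c A) = E := by
      rw [hscmul, hinv2 A hA]
      norm_num [sc_zero]
    have hscinv : inv (sc c A) = sc (-c) (inv A) :=
      (huniq (sc c A) h (sc (-c) (inv A)) (hscal _ (hinvH A hA) _) h1 h2).symm
    apply Equiv.ext
    intro i
    rw [hPapp, hPapp, hscinv]
    have := fmap_sc (A := inv A) (B := A) hEE
      (hinv2 A hA) (hinv1 A hA)
      ((hid _ (hinvH A hA)).2) ((hid _ (hinvH A hA)).1)
      ((hid A hA).2) ((hid A hA).1) (-c)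
    rw [show sc (- - c) A = sc c A from by rw [neg_neg]] at this
    exact congrFun this i
  -- kernel of P
  have hPker : ∀ A (hA : A ∈ H), P A hA = 1 → ∃ c, A = sc c E := by
    intro A hA hp
    have hfix : ∀ i, fmap E A (inv A) i = i := by
      intro i
      have h1 : (P A hA)⁻¹ = 1 := by rw [hp]; exact inv_one
      have := hPsymm A hA i
      rw [h1, Equiv.Perm.one_apply] at this
      exact this.symm
    exact eq_sc_of_fix hEE (hinv1 A hA) (hinv2 A hA) ((hid A hA).2) ((hid A hA).1)
      ((hid _ (hinvH A hA)).2) ((hid _ (hinvH A hA)).1) hfix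
  -- elements with the same permutation differ by a scalar
  have hPdiff : ∀ A (hA : A ∈ H), ∀ A' (hA' : A' ∈ H), P A hA = P A' hA' →
      ∃ c, A' = sc c A := by
    intro A hA A' hA' hpp
    have hC : tmul A' (inv A) ∈ H := hmulH _ hA' _ (hinvH A hA)
    have h1 : P (tmul A' (inv A)) hC = 1 := by
      rw [hPmul A' hA' (inv A) (hinvH A hA) hC, hPinv A hA (hinvH A hA), ← hpp,
        mul_inv_cancel]
    obtain ⟨c, hc⟩ := hPker _ hC h1
    refine ⟨c, ?_⟩
    calc A' = tmul A' E := ((hid A' hA').2).symm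
    _ = tmul A' (tmul (inv A) A) := by rw [hinv2 A hA]
    _ = tmul (tmul A' (inv A)) A := (tmul_assoc _ _ _).symm
    _ = tmul (sc c E) A := by rw [hc]
    _ = sc c (tmul E A) := by rw [sc_tmul]
    _ = sc c A := by rw [(hid A hA).1]
  have hPcongr : ∀ A A' (hA : A ∈ H) (hA' : A' ∈ H), A = A' → P A hA = P A' hA' := by
    intro A A' hA hA' hh
    subst hh
    rfl
  -- the subgroup of permutations realized by H
  let T : Set (Equiv.Perm (Fin n)) := {σ | ∃ A, ∃ hA : A ∈ H, P A hA = σ}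
  let Sig : Subgroup (Equiv.Perm (Fin n)) :=
    { carrier := T
      mul_mem' := by
        rintro σ τ ⟨A, hA, rfl⟩ ⟨A', hA', rfl⟩
        exact ⟨tmul A A', hmulH A hA A' hA', hPmul A hA A' hA' _⟩
      one_mem' := ⟨E, hEH, hPE hEH⟩
      inv_mem' := by
        rintro σ ⟨A, hA, rfl⟩
        exact ⟨inv A, hinvH A hA, hPinv A hA _⟩ }
  -- the weight
  obtain ⟨wt, hwt⟩ : ∃ wt : MM n → ℝ, ∀ A, wt A = w E A (inv A) := ⟨_, fun _ => rfl⟩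
  set r : ℝ := ((RR E).card : ℝ) with hrdef
  have hr0 : (0:ℝ) < r := by
    rw [hrdef]
    exact_mod_cast Finset.card_pos.2 (RR_nonempty hEE)
  have hprodinv : ∀ A (hA : A ∈ H), ∀ A' (hA' : A' ∈ H),
      inv (tmul A A') = tmul (inv A') (inv A) := by
    intro A hA A' hA'
    exact (huniq (tmul A A') (hmulH A hA A' hA') (tmul (inv A') (inv A))
      (hmulH _ (hinvH A' hA') _ (hinvH A hA))
      (hPQ hEE (hinv1 A hA) (hinv2 A hA) ((hid A hA).2) ((hid A hA).1)
        ((hid _ (hinvH A hA)).2) ((hid _ (hinvH A hA)).1)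
        (hinv1 A' hA') (hinv2 A' hA') ((hid A' hA').2) ((hid A' hA').1)
        ((hid _ (hinvH A' hA')).2) ((hid _ (hinvH A' hA')).1))
      (hQP hEE (hinv1 A hA) (hinv2 A hA) ((hid A hA).2) ((hid A hA).1)
        ((hid _ (hinvH A hA)).2) ((hid _ (hinvH A hA)).1)
        (hinv1 A' hA') (hinv2 A' hA') ((hid A' hA').2) ((hid A' hA').1)
        ((hid _ (hinvH A' hA')).2) ((hid _ (hinvH A' hA')).1))).symm
  have hwtmul : ∀ A (hA : A ∈ H), ∀ A' (hA' : A' ∈ H),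
      wt (tmul A A') = wt A + wt A' := by
    intro A hA A' hA'
    rw [hwt, hwt, hwt, hprodinv A hA A' hA']
    exact w_mul hEE (hinv1 A hA) (hinv2 A hA) ((hid A hA).2) ((hid A hA).1)
      ((hid _ (hinvH A hA)).2) ((hid _ (hinvH A hA)).1)
      (hinv1 A' hA') (hinv2 A' hA') ((hid A' hA').2) ((hid A' hA').1)
      ((hid _ (hinvH A' hA')).2) ((hid _ (hinvH A' hA')).1)
  have hwtsc : ∀ A (hA : A ∈ H), ∀ c : ℝ, wt (sc c A) = r * c + wt A := by
    intro A hA c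
    have h1 : tmul (sc c A) (sc (-c) (inv A)) = E := by
      rw [hscmul, hinv1 A hA]
      norm_num [sc_zero]
    have h2 : tmul (sc (-c) (inv A)) (sc c A) = E := by
      rw [hscmul, hinv2 A hA]
      norm_num [sc_zero]
    have hscinv : inv (sc c A) = sc (-c) (inv A) :=
      (huniq (sc c A) (hscal A hA c) (sc (-c) (inv A)) (hscal _ (hinvH A hA) _) h1 h2).symm
    rw [hwt, hwt, hscinv, hrdef]
    exact w_sc hEE (hinv1 A hA) (hinv2 A hA) ((hid A hA).2) ((hid A hA).1)
      ((hid _ (hinvH A hA)).2) ((hid _ (hinvH A hA)).1) c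
  -- choice of representatives for each permutation in Sig
  have hpick : ∀ σ : ↥Sig, ∃ A, ∃ hA : A ∈ H, P A hA = σ.1 := fun σ => σ.2
  choose pick pickH pickP using hpick
  -- the isomorphism
  obtain ⟨e, he⟩ : ∃ e : Multiplicative ℝ × ↥Sig → MM n, ∀ g,
      e g = sc (Multiplicative.toAdd g.1 - wt (pick g.2) / r) (pick g.2) :=
    ⟨_, fun _ => rfl⟩
  have hmult : ∀ g h, e (g * h) = tmul (e g) (e h) := by
    intro g h
    have hP2 : P (tmul (pick g.2) (pick h.2))
        (hmulH _ (pickH g.2) _ (pickH h.2)) = P (pick ((g*h).2)) (pickH ((g*h).2)) := by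
      rw [hPmul _ (pickH g.2) _ (pickH h.2), pickP g.2, pickP h.2, pickP ((g*h).2)]
      rfl
    obtain ⟨c, hc⟩ := hPdiff _ (pickH ((g*h).2)) _
      (hmulH _ (pickH g.2) _ (pickH h.2)) hP2.symm
    have hcval : wt (pick g.2) + wt (pick h.2) = r * c + wt (pick ((g*h).2)) := by
      rw [← hwtmul _ (pickH g.2) _ (pickH h.2), hc, hwtsc _ (pickH ((g*h).2))]
    rw [he, he, he, hscmul, hc, sc_sc]
    congr 1
    have htA : Multiplicative.toAdd ((g*h).1) =
        Multiplicative.toAdd g.1 + Multiplicative.toAdd h.1 := rfl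
    have h1 : (wt (pick g.2) + wt (pick h.2) - wt (pick ((g*h).2))) / r = c := by
      rw [div_eq_iff (ne_of_gt hr0)]
      linarith
    rw [htA, ← h1]
    ring
  have hinj : Function.Injective e := by
    intro g h hgh
    rw [he, he] at hgh
    set a := Multiplicative.toAdd g.1 - wt (pick g.2) / r with ha
    set b := Multiplicative.toAdd h.1 - wt (pick h.2) / r with hb
    have hXY : pick g.2 = sc (b - a) (pick h.2) := by
      funext i j
      have h0 := congrFun (congrFun hgh i) j
      simp only [sc_apply] at h0 ⊢
      linarith
    have hsnd : g.2 = h.2 := by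
      apply Subtype.ext
      rw [← pickP g.2, ← pickP h.2]
      rw [hPcongr _ _ (pickH g.2) (by rw [← hXY]; exact pickH g.2) hXY]
      exact hPsc _ (pickH h.2) (b - a) _
    have hXeq : pick g.2 = pick h.2 := by rw [hsnd]
    have hab : a = b := by
      have h0 := congrFun (congrFun hgh ⟨0, Nat.pos_of_ne_zero (NeZero.ne n)⟩)
        ⟨0, Nat.pos_of_ne_zero (NeZero.ne n)⟩
      rw [hXeq] at h0
      simp only [sc_apply] at h0
      linarith
    have hfst : g.1 = h.1 := by
      have : Multiplicative.toAdd g.1 = Multiplicative.toAdd h.1 := by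
        rw [ha, hb, hsnd] at hab
        linarith
      exact this
    exact Prod.ext hfst hsnd
  have hrange : Set.range e = H := by
    apply Set.eq_of_subset_of_subset
    · rintro M ⟨g, rfl⟩
      rw [he]
      exact hscal _ (pickH g.2) _
    · intro M hM
      have hσT : P M hM ∈ Sig := ⟨M, hM, rfl⟩
      set σ : ↥Sig := ⟨P M hM, hσT⟩ with hσ
      have hps : P (pick σ) (pickH σ) = P M hM := pickP σ
      obtain ⟨c, hc⟩ := hPdiff _ (pickH σ) M hM hps
      refine ⟨(Multiplicative.ofAdd (c + wt (pick σ) / r), σ), ?_⟩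
      rw [he]
      show sc (c + wt (pick σ) / r - wt (pick σ) / r) (pick σ) = M
      rw [show c + wt (pick σ) / r - wt (pick σ) / r = c from by ring]
      exact hc.symm
  exact ⟨Sig, e, hinj, hrange, hmult⟩


end TropAux

/-- Every maximal subgroup H of the semigroup (M_n(ℝ), ⊗) is isomorphic as a
group to a direct product ℝ × Σ for some subgroup Σ of the symmetric group
S_n: there is a multiplication-preserving bijection from (ℝ,+) × Σ onto H. -/
theorem maximal_subgroup_iso_R_times_perms {n : ℕ} [NeZero n]
    (H : Set (Matrix (Fin n) (Fin n) ℝ)) (hH : IsMaximalSubgroupOfTrop H) :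
    ∃ (Sig : Subgroup (Equiv.Perm (Fin n)))
      (e : Multiplicative ℝ × Sig → Matrix (Fin n) (Fin n) ℝ),
      Function.Injective e ∧ Set.range e = H ∧
      ∀ g h, e (g * h) = tmul (e g) (e h) := by
  obtain ⟨⟨hne, hmulH, E, hEH, hid, hinv⟩, hmax⟩ := hH
  have hscmul : ∀ (X Y : Matrix (Fin n) (Fin n) ℝ) (c d : ℝ),
      tmul (TropAux.sc c X) (TropAux.sc d Y) = TropAux.sc (c + d) (tmul X Y) := by
    intro X Y c d
    rw [TropAux.sc_tmul, TropAux.tmul_sc, TropAux.sc_sc]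
  have hscal : ∀ a ∈ H, ∀ c : ℝ, TropAux.sc c a ∈ H := by
    set H' : Set (Matrix (Fin n) (Fin n) ℝ) :=
      {M | ∃ c A, A ∈ H ∧ M = TropAux.sc c A} with hH'
    have hsub : H ⊆ H' := fun A hA => ⟨0, A, hA, (TropAux.sc_zero A).symm⟩
    have hgrp : IsSubgroupOfTrop H' := by
      refine ⟨⟨E, hsub hEH⟩, ?_, E, hsub hEH, ?_, ?_⟩
      · rintro a ⟨c, A, hA, rfl⟩ b ⟨d, B, hB, rfl⟩
        exact ⟨c + d, tmul A B, hmulH A hA B hB, (hscmul A B c d)⟩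
      · rintro a ⟨c, A, hA, rfl⟩
        constructor
        · rw [TropAux.tmul_sc, (hid A hA).1]
        · rw [TropAux.sc_tmul, (hid A hA).2]
      · rintro a ⟨c, A, hA, rfl⟩
        obtain ⟨B, hB, h1, h2⟩ := hinv A hA
        refine ⟨TropAux.sc (-c) B, ⟨-c, B, hB, rfl⟩, ?_, ?_⟩
        · rw [hscmul, h1]
          norm_num [TropAux.sc_zero]
        · rw [hscmul, h2]
          norm_num [TropAux.sc_zero]
    have hHH' := hmax H' hgrp hsub
    intro a ha c
    rw [hHH']
    exact ⟨c, a, ha, rfl⟩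
  exact TropAux.main H E hEH hmulH hid hinv hscal
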